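/- arXiv:2007.12690 — 2 statements merged into one kernel-verified Lean document; each statement's English description precedes it below -/
import Mathlib

section
/- Let π be a grounded pattern with streak s, and let p be an integer with 1 ≤ p ≤ s. Then in any p-pseudo cluster with respect to π, the root of the underlying tree has label 1. -/
/-- A rooted labeled forest on `[n]`: vertices are identified with their labels in `Fin n`
(`i : Fin n` representing the label `i+1`), each vertex has an optional parent, and the
parent relation is acyclic. Components are rooted at the vertices with no parent, and
children are unordered since only the parent function is recorded. -/
structure RForest (n : ℕ) where
  parent : Fin n → Option (Fin n)
  acyclic : ∀ v : Fin n, ¬ Relation.TransGen (fun a b => parent b = some a) v v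

namespace RForest

variable {n : ℕ}

/-- `u` is a strict ancestor of `v`. -/
def SAnc (F : RForest n) (u v : Fin n) : Prop :=
  Relation.TransGen (fun a b => F.parent b = some a) u v

/-- `u` is an ancestor of `v` (possibly `u = v`). -/
def Anc (F : RForest n) (u v : Fin n) : Prop :=
  F.SAnc u v ∨ u = v

/-- `F` is a tree: it has exactly one root, i.e. exactly one component. -/
def IsTree (F : RForest n) : Prop :=
  ∃! r : Fin n, F.parent r = none

end RForest

/-- A pattern of length `k` is a permutation of `[k]` (presented 0-indexed on `Fin k`). -/
abbrev Pattern (k : ℕ) := Equiv.Perm (Fin k)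

/-- The complement of a pattern: `π̄(i) = k + 1 - π(i)` in 1-indexed terms. -/
def Pattern.compl {k : ℕ} (π : Pattern k) : Pattern k :=
  π.trans ⟨Fin.rev, Fin.rev, Fin.rev_rev, Fin.rev_rev⟩

/-- `F` contains a (classical) instance of the pattern `π`: vertices `v 0, …, v (k-1)`,
each a strict ancestor of the next, whose labels are in the same relative order as `π`. -/
def ContainsPat {n k : ℕ} (F : RForest n) (π : Pattern k) : Prop :=
  ∃ v : Fin k → Fin n,
    (∀ i j : Fin k, i < j → F.SAnc (v i) (v j)) ∧
    (∀ i j : Fin k, v i < v j ↔ π i < π j)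

/-- `v` is a consecutive instance of `π` in `F`: a downward path (each vertex the parent of
the next) whose labels are in the same relative order as `π`. -/
def IsConsInstance {n k : ℕ} (F : RForest n) (π : Pattern k) (v : Fin k → Fin n) : Prop :=
  (∀ i j : Fin k, (j : ℕ) = (i : ℕ) + 1 → F.parent (v j) = some (v i)) ∧
  (∀ i j : Fin k, v i < v j ↔ π i < π j)

/-- `F` contains a consecutive instance of `π`. -/
def CContainsPat {n k : ℕ} (F : RForest n) (π : Pattern k) : Prop :=
  ∃ v, IsConsInstance F π v

/-- `F` avoids every pattern in the set `S` (of patterns of arbitrary lengths). -/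
def AvoidsSet {n : ℕ} (F : RForest n) (S : Set ((k : ℕ) × Pattern k)) : Prop :=
  ∀ p ∈ S, ¬ ContainsPat F p.2

/-- `f_n(S)`: the number of rooted labeled forests on `[n]` avoiding `S`. -/
noncomputable def fCount (S : Set ((k : ℕ) × Pattern k)) (n : ℕ) : ℕ :=
  Nat.card {F : RForest n // AvoidsSet F S}

/-- `t_n(S)`: the number of rooted labeled trees on `[n]` avoiding `S`. -/
noncomputable def tCount (S : Set ((k : ℕ) × Pattern k)) (n : ℕ) : ℕ :=
  Nat.card {F : RForest n // F.IsTree ∧ AvoidsSet F S}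

/-- The number of rooted labeled forests on `[n]` consecutively avoiding `π`. -/
noncomputable def cCount {k : ℕ} (π : Pattern k) (n : ℕ) : ℕ :=
  Nat.card {F : RForest n // ¬ CContainsPat F π}

/-- c-forest-Wilf equivalence of two patterns. -/
def CForestWilfEquiv {k k' : ℕ} (π : Pattern k) (π' : Pattern k') : Prop :=
  ∀ n : ℕ, cCount π n = cCount π' n

def p123 : Pattern 3 := 1
def p132 : Pattern 3 := ⟨![0, 2, 1], ![0, 2, 1], by intro x; fin_cases x <;> rfl, by intro x; fin_cases x <;> rfl⟩
def p213 : Pattern 3 := ⟨![1, 0, 2], ![1, 0, 2], by intro x; fin_cases x <;> rfl, by intro x; fin_cases x <;> rfl⟩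
def p231 : Pattern 3 := ⟨![1, 2, 0], ![2, 0, 1], by intro x; fin_cases x <;> rfl, by intro x; fin_cases x <;> rfl⟩
def p312 : Pattern 3 := ⟨![2, 0, 1], ![1, 2, 0], by intro x; fin_cases x <;> rfl, by intro x; fin_cases x <;> rfl⟩
def p321 : Pattern 3 := ⟨![2, 1, 0], ![2, 1, 0], by intro x; fin_cases x <;> rfl, by intro x; fin_cases x <;> rfl⟩
def p2413 : Pattern 4 := ⟨![1, 3, 0, 2], ![2, 0, 3, 1], by intro x; fin_cases x <;> rfl, by intro x; fin_cases x <;> rfl⟩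
def p2314 : Pattern 4 := ⟨![1, 2, 0, 3], ![2, 0, 1, 3], by intro x; fin_cases x <;> rfl, by intro x; fin_cases x <;> rfl⟩
def p3142 : Pattern 4 := ⟨![2, 0, 3, 1], ![1, 3, 0, 2], by intro x; fin_cases x <;> rfl, by intro x; fin_cases x <;> rfl⟩
def p3124 : Pattern 4 := ⟨![2, 0, 1, 3], ![1, 2, 0, 3], by intro x; fin_cases x <;> rfl, by intro x; fin_cases x <;> rfl⟩

/-- The streak of `π`: the largest `m ≤ k` such that `π(i) = i` for all `1 ≤ i ≤ m`
(0-indexed: `π i = i` for all `i < m`). -/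
noncomputable def streak {k : ℕ} (π : Pattern k) : ℕ :=
  sSup {m | m ≤ k ∧ ∀ i : Fin k, (i : ℕ) < m → (π i : ℕ) = (i : ℕ)}

/-- The height of the entry at (0-indexed) position `t` of `π`: the largest `m ≤ t` such
that the `m` consecutive entries of `π` ending at position `t` are increasing. -/
noncomputable def heightAt {k : ℕ} (π : Pattern k) (t : Fin k) : ℕ :=
  sSup {m | m ≤ (t : ℕ) ∧ ∀ a b : Fin k, (t : ℕ) < (a : ℕ) + m →
    (b : ℕ) = (a : ℕ) + 1 → (b : ℕ) ≤ (t : ℕ) → π a < π b}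

/-- The max height of `π`: the maximum of the heights over all non-initial positions. -/
noncomputable def maxHeight {k : ℕ} (π : Pattern k) : ℕ :=
  sSup {h | ∃ t : Fin k, 0 < (t : ℕ) ∧ h = heightAt π t}

/-- A pattern is grounded if it is not the identity and its max height is at most its
streak. -/
def Grounded {k : ℕ} (π : Pattern k) : Prop :=
  π ≠ 1 ∧ maxHeight π ≤ streak π

/-- The number of rooted labeled forests on `[n]` with exactly `m` consecutive
instances of `π`. -/
noncomputable def strongCount {k : ℕ} (π : Pattern k) (n m : ℕ) : ℕ :=
  Nat.card {F : RForest n // Nat.card {v : Fin k → Fin n // IsConsInstance F π v} = m}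

/-- Strong c-forest-Wilf equivalence: for all `m, n`, the number of forests on `[n]`
with exactly `m` consecutive instances of `π` equals that for `π'`. -/
def StrongCEquiv {k : ℕ} (π π' : Pattern k) : Prop :=
  ∀ m n : ℕ, strongCount π n m = strongCount π' n m

/-- A `p`-pseudo cluster with respect to `π` (of length `k`): a rooted labeled tree on
`[n]` together with a set `H` of distinct highlighted consecutive instances of the suffix
patterns `π(1)⋯π(k), π(2)⋯π(k), …, π(p)⋯π(k)` (an element `⟨q, w⟩` of `H` is an instance
of the suffix `π(q+1)⋯π(k)`), such that every instance of a proper suffix contains the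
root, every vertex belongs to a highlighted instance, and the highlighted instances are
connected (no proper nonempty vertex set contains or misses every instance). -/
structure PseudoCluster (n k p : ℕ) (π : Pattern k) where
  F : RForest n
  tree : ∃! r : Fin n, F.parent r = none
  H : Set ((q : ℕ) × (Fin (k - q) → Fin n))
  suffix_lt : ∀ I ∈ H, I.1 < p
  path : ∀ I ∈ H, ∀ i j : Fin (k - I.1), (j : ℕ) = (i : ℕ) + 1 →
    F.parent (I.2 j) = some (I.2 i)
  order : ∀ I ∈ H, ∀ i j : Fin (k - I.1),
    (I.2 i < I.2 j ↔
      π ⟨I.1 + (i : ℕ), by have := i.isLt; omega⟩ <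
      π ⟨I.1 + (j : ℕ), by have := j.isLt; omega⟩)
  root_mem : ∀ I ∈ H, 0 < I.1 → ∃ i : Fin (k - I.1), F.parent (I.2 i) = none
  cover : ∀ v : Fin n, ∃ I ∈ H, ∃ i : Fin (k - I.1), I.2 i = v
  connected : ¬ ∃ V : Set (Fin n), V.Nonempty ∧ V ≠ Set.univ ∧
    ∀ I ∈ H, (∀ i : Fin (k - I.1), I.2 i ∈ V) ∨ (∀ i : Fin (k - I.1), I.2 i ∉ V)

/-!
Because `p ≤ streak π`, each highlighted instance realises a suffix of `π` that starts inside
the streak, so its top vertex carries its smallest label. The vertex with label `1` can therefore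
only occur at the top of an instance, and then every highlighted instance lies either entirely
inside or entirely outside the subtree below that vertex. Connectivity forces this subtree to be
the whole tree, so the vertex with label `1` is the root.
-/

namespace RForest

variable {n : ℕ} (F : RForest n)

theorem anc_iff_reflTransGen {u v : Fin n} :
    F.Anc u v ↔ Relation.ReflTransGen (fun a b => F.parent b = some a) u v := by
  rw [Relation.reflTransGen_iff_eq_or_transGen, Anc, SAnc, or_comm, eq_comm]

theorem anc_iff_of_parent_eq {z u v : Fin n} (h : F.parent v = some u) :
    F.Anc z v ↔ F.Anc z u ∨ z = v := by
  simp only [anc_iff_reflTransGen]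
  rw [Relation.ReflTransGen.cases_tail_iff, h]
  simp only [Option.some_inj, exists_eq_right', eq_comm (a := v), or_comm]

theorem not_anc_of_parent_eq_none {z r : Fin n} (hr : F.parent r = none) (hz : z ≠ r) :
    ¬ F.Anc z r := by
  rintro (h | rfl)
  · obtain ⟨b, -, hb⟩ := Relation.TransGen.tail'_iff.mp h
    simp [hr] at hb
  · exact hz rfl

def IsPath {m : ℕ} (w : Fin m → Fin n) : Prop :=
  ∀ i j : Fin m, (j : ℕ) = i + 1 → F.parent (w j) = some (w i)

variable {F}

theorem IsPath.anc_iff_anc_head {m : ℕ} {w : Fin m → Fin n} (hw : F.IsPath w) (hm : 0 < m)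
    {z : Fin n} (hz : ∀ i, w i = z → (i : ℕ) = 0) (i : Fin m) :
    F.Anc z (w i) ↔ F.Anc z (w ⟨0, hm⟩) := by
  obtain ⟨i, hi⟩ := i
  induction i with
  | zero => rfl
  | succ i ih =>
    have hz' : z ≠ w ⟨i + 1, hi⟩ := fun h => absurd (hz _ h.symm) (Nat.succ_ne_zero i)
    rw [F.anc_iff_of_parent_eq (hw ⟨i, by omega⟩ ⟨i + 1, hi⟩ rfl), ih (by omega),
      or_iff_left hz']

theorem IsPath.forall_anc_or_forall_not_anc {m : ℕ} {w : Fin m → Fin n} (hw : F.IsPath w)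
    {z : Fin n} (hz : ∀ i, w i = z → (i : ℕ) = 0) :
    (∀ i, F.Anc z (w i)) ∨ ∀ i, ¬ F.Anc z (w i) := by
  rcases Nat.eq_zero_or_pos m with rfl | hm
  · exact Or.inl fun i => i.elim0
  · simp only [hw.anc_iff_anc_head hm hz]
    exact em _ |>.imp (fun h _ => h) (fun h _ => h)

end RForest

section Streak

variable {k : ℕ} (π : Pattern k)

theorem streak_mem :
    streak π ∈ {m | m ≤ k ∧ ∀ i : Fin k, (i : ℕ) < m → (π i : ℕ) = (i : ℕ)} :=
  Nat.sSup_mem ⟨0, Nat.zero_le k, fun _ hi => absurd hi (Nat.not_lt_zero _)⟩ ⟨k, fun _ hm => hm.1⟩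

theorem apply_eq_of_lt_streak {i : Fin k} (hi : (i : ℕ) < streak π) : (π i : ℕ) = i :=
  (streak_mem π).2 i hi

theorem apply_lt_apply_of_lt_streak {a b : Fin k} (ha : (a : ℕ) < streak π) (hab : a < b) :
    π a < π b := by
  -- If `π b ≤ π a = a`, then `π b` lies in the streak and is fixed, which forces `b = π b ≤ a`.
  by_contra! hba
  rw [Fin.lt_def] at hab
  rw [Fin.le_def, apply_eq_of_lt_streak π ha] at hba
  have hb : (π b : ℕ) < streak π := by omega
  have hb_fix : (π b : ℕ) = b :=
    congrArg Fin.val (π.injective (Fin.ext (apply_eq_of_lt_streak π hb) : π ⟨π b, _⟩ = π b))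
  omega

end Streak

namespace PseudoCluster

variable {n k p : ℕ} {π : Pattern k} (C : PseudoCluster n k p π)

theorem isPath {I : (q : ℕ) × (Fin (k - q) → Fin n)} (hI : I ∈ C.H) : C.F.IsPath I.2 :=
  C.path I hI

theorem head_lt_apply (hps : p ≤ streak π) {I : (q : ℕ) × (Fin (k - q) → Fin n)} (hI : I ∈ C.H)
    (h0 : 0 < k - I.1) {i : Fin (k - I.1)} (hi : (i : ℕ) ≠ 0) : I.2 ⟨0, h0⟩ < I.2 i := by
  rw [C.order I hI]
  apply apply_lt_apply_of_lt_streak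
  · have := C.suffix_lt I hI
    simp only [add_zero]
    omega
  · simp only [Fin.mk_lt_mk]
    omega

theorem eq_zero_of_label_eq_zero (hps : p ≤ streak π) {I : (q : ℕ) × (Fin (k - q) → Fin n)}
    (hI : I ∈ C.H) (i : Fin (k - I.1)) (h : (I.2 i : ℕ) = 0) : (i : ℕ) = 0 := by
  by_contra hi
  have := C.head_lt_apply hps hI (by omega) hi
  rw [Fin.lt_def, h] at this
  omega

end PseudoCluster

theorem pseudoCluster_root_label_one_general {k : ℕ} (π : Pattern k)
    (p : ℕ) (hps : p ≤ streak π) {n : ℕ} (C : PseudoCluster n k p π) :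
    ∀ r : Fin n, C.F.parent r = none → (r : ℕ) = 0 := by
  intro r hr
  by_contra hr0
  set z : Fin n := ⟨0, r.pos⟩
  have hzr : z ≠ r := fun h => hr0 (congrArg Fin.val h).symm
  apply C.connected
  refine ⟨{v | C.F.Anc z v}, ⟨z, Or.inr rfl⟩, ?_, ?_⟩
  · intro hV
    exact C.F.not_anc_of_parent_eq_none hr hzr (hV.symm ▸ Set.mem_univ r : r ∈ {v | C.F.Anc z v})
  · intro I hI
    exact (C.isPath hI).forall_anc_or_forall_not_anc
      fun i hi => C.eq_zero_of_label_eq_zero hps hI i (by rw [hi])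

/-- In any `p`-pseudo cluster (`1 ≤ p ≤ streak π`) with respect to a grounded pattern `π`,
the root of the underlying tree has label `1` (0-indexed: label `0`). -/
theorem pseudoCluster_root_label_one {k : ℕ} (π : Pattern k) (hg : Grounded π)
    (p : ℕ) (hp1 : 1 ≤ p) (hps : p ≤ streak π) {n : ℕ} (C : PseudoCluster n k p π) :
    ∀ r : Fin n, C.F.parent r = none → (r : ℕ) = 0 :=
  pseudoCluster_root_label_one_general π p hps C
end

section
/- Let S = {213, 231, 312, 321}. Then t_{k+1}(S) = t_k(S) + f_k(S) for all k ≥ 0 (this is the coefficientwise form of the statement that the exponential generating function T(x) = Σ_{n≥0} t_n(S) x^n/n! satisfies the differential equation T′ = T + e^T with T(0) = 0). -/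
/-!
Vertex `0` carries the smallest label, and no pattern of `S = {213, 231, 312, 321}` starts with
its minimum. Hence if `0` is the root of a tree, putting `0` on top of a forest neither creates
nor destroys instances, and deleting the root `0` is a bijection onto the avoiding forests on
`k` vertices. If `0` is not the root, with parent `p`, then a child `c` of `0` would give an
instance `p 0 c` of `213` or `312`, and a parent `q` of `p` an instance `q p 0` of `231` or
`321`. So `0` is a leaf attached to the root, which lies in no instance of a pattern of length
three, and deleting it is a bijection onto the avoiding trees on `k` vertices.
-/

open Relation

theorem Nat.card_eq_card_subtype_add_card_subtype_not {α : Type*} [Finite α] (p : α → Prop) :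
    Nat.card α = Nat.card {a // p a} + Nat.card {a // ¬ p a} := by
  classical
  rw [← Nat.card_sum, Nat.card_congr (Equiv.sumCompl p)]

section ParentFunction

variable {α : Type*} {g : α → Option α} {u v : α}

theorem not_transGen_of_eq_none (hv : g v = none) : ¬ TransGen (fun a b => g b = some a) u v := by
  intro h
  obtain ⟨_, _, h⟩ := TransGen.tail'_iff.mp h
  simp [hv] at h

theorem not_transGen_of_forall_ne_some (hu : ∀ c, g c ≠ some u) :
    ¬ TransGen (fun a b => g b = some a) u v := by
  intro h
  obtain ⟨_, h, -⟩ := TransGen.head'_iff.mp h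
  exact hu _ h

end ParentFunction

section EraseZero

variable {k : ℕ}

/-- Vertex `i.succ` becomes `i`, and the children of `0` become roots. -/
def eraseZeroParent (g : Fin (k + 1) → Option (Fin (k + 1))) (i : Fin k) : Option (Fin k) :=
  (g i.succ).bind (Fin.cases none some)

def consRootParent (g : Fin k → Option (Fin k)) : Fin (k + 1) → Option (Fin (k + 1)) :=
  Fin.cases none fun i => some ((g i).elim 0 Fin.succ)

def consLeafParent (g : Fin k → Option (Fin k)) (r : Fin k) :
    Fin (k + 1) → Option (Fin (k + 1)) :=
  Fin.cases (some r.succ) fun i => (g i).map Fin.succ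

variable {g : Fin (k + 1) → Option (Fin (k + 1))}

theorem eraseZeroParent_eq_some_iff {i j : Fin k} :
    eraseZeroParent g j = some i ↔ g j.succ = some i.succ := by
  unfold eraseZeroParent
  cases g j.succ with
  | none => simp
  | some p => cases p using Fin.cases <;> simp [Fin.succ_ne_zero, eq_comm]

theorem eraseZeroParent_eq_none_iff {i : Fin k} :
    eraseZeroParent g i = none ↔ g i.succ = none ∨ g i.succ = some 0 := by
  unfold eraseZeroParent
  cases g i.succ with
  | none => simp
  | some p => cases p using Fin.cases <;> simp [Fin.succ_ne_zero]

theorem transGen_succ_of_transGen_eraseZeroParent {i j : Fin k}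
    (h : TransGen (fun a b => eraseZeroParent g b = some a) i j) :
    TransGen (fun a b => g b = some a) i.succ j.succ :=
  h.lift Fin.succ fun _ _ => eraseZeroParent_eq_some_iff.mp

/-- A path between two vertices other than `0` cannot pass through `0` when `0` is a root or a
leaf, so it survives the deletion of `0`. -/
theorem transGen_eraseZeroParent_of_transGen_succ (h0 : g 0 = none ∨ ∀ c, g c ≠ some 0)
    {i j : Fin k} (h : TransGen (fun a b => g b = some a) i.succ j.succ) :
    TransGen (fun a b => eraseZeroParent g b = some a) i j := by
  generalize hv : j.succ = v at h
  induction h generalizing j with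
  | single h =>
    subst hv
    exact .single (eraseZeroParent_eq_some_iff.mpr h)
  | @tail b c hib hbc ih =>
    subst hv
    have hb : b ≠ 0 := by
      rintro rfl
      exact h0.elim (fun h0 => not_transGen_of_eq_none h0 hib) (fun h0 => h0 _ hbc)
    obtain ⟨b, rfl⟩ := Fin.exists_succ_eq.mpr hb
    exact (ih rfl).tail (eraseZeroParent_eq_some_iff.mpr hbc)

theorem acyclic_of_eraseZeroParent (h0 : g 0 = none ∨ ∀ c, g c ≠ some 0)
    (h : ∀ i, ¬ TransGen (fun a b => eraseZeroParent g b = some a) i i) (v : Fin (k + 1)) :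
    ¬ TransGen (fun a b => g b = some a) v v := by
  intro hv
  cases v using Fin.cases with
  | zero => exact h0.elim (not_transGen_of_eq_none · hv) (not_transGen_of_forall_ne_some · hv)
  | succ i => exact h i (transGen_eraseZeroParent_of_transGen_succ h0 hv)

theorem eraseZeroParent_consRootParent (g : Fin k → Option (Fin k)) :
    eraseZeroParent (consRootParent g) = g := by
  funext i
  cases h : g i <;> simp [eraseZeroParent, consRootParent, h]

theorem eraseZeroParent_consLeafParent (g : Fin k → Option (Fin k)) (r : Fin k) :
    eraseZeroParent (consLeafParent g r) = g := by
  funext i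
  cases h : g i <;> simp [eraseZeroParent, consLeafParent, h]

theorem consLeafParent_ne_some_zero (g : Fin k → Option (Fin k)) (r : Fin k) (c : Fin (k + 1)) :
    consLeafParent g r c ≠ some 0 := by
  cases c using Fin.cases <;> simp [consLeafParent, Fin.succ_ne_zero]

end EraseZero

namespace RForest

variable {n k : ℕ}

theorem parent_injective : Function.Injective (parent : RForest n → Fin n → Option (Fin n)) := by
  rintro ⟨f, _⟩ ⟨g, _⟩ rfl
  rfl

instance : Finite (RForest n) := Finite.of_injective _ parent_injective

def IsLeaf (F : RForest n) (v : Fin n) : Prop :=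
  ∀ c, F.parent c ≠ some v

theorem SAnc.single {F : RForest n} {u v : Fin n} (h : F.parent v = some u) : F.SAnc u v :=
  TransGen.single h

theorem SAnc.trans {F : RForest n} {u v w : Fin n} (huv : F.SAnc u v) (hvw : F.SAnc v w) :
    F.SAnc u w :=
  TransGen.trans huv hvw

theorem SAnc.ne {F : RForest n} {u v : Fin n} (h : F.SAnc u v) : u ≠ v := by
  rintro rfl
  exact F.acyclic u h

theorem not_sAnc_of_parent_eq_none {F : RForest n} {u r : Fin n} (hr : F.parent r = none) :
    ¬ F.SAnc u r :=
  not_transGen_of_eq_none hr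

theorem IsLeaf.not_sAnc {F : RForest n} {u v : Fin n} (hu : F.IsLeaf u) : ¬ F.SAnc u v :=
  not_transGen_of_forall_ne_some hu

theorem eq_of_sAnc_of_parent_eq_some {F : RForest n} {u c r : Fin n} (hc : F.parent c = some r)
    (hr : F.parent r = none) (h : F.SAnc u c) : u = r := by
  obtain ⟨b, hub, hbc⟩ := TransGen.tail'_iff.mp h
  obtain rfl : b = r := Option.some_injective _ (hbc.symm.trans hc)
  rcases reflTransGen_iff_eq_or_transGen.mp hub with rfl | hub
  · rfl
  · exact absurd hub (not_sAnc_of_parent_eq_none hr)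

def eraseZero (F : RForest (k + 1)) : RForest k :=
  ⟨eraseZeroParent F.parent,
    fun i h => F.acyclic i.succ (transGen_succ_of_transGen_eraseZeroParent h)⟩

def consRoot (F : RForest k) : RForest (k + 1) :=
  ⟨consRootParent F.parent, acyclic_of_eraseZeroParent (Or.inl rfl)
    (by rw [eraseZeroParent_consRootParent]; exact F.acyclic)⟩

def consLeaf (F : RForest k) (r : Fin k) : RForest (k + 1) :=
  ⟨consLeafParent F.parent r,
    acyclic_of_eraseZeroParent (Or.inr (consLeafParent_ne_some_zero _ r))
    (by rw [eraseZeroParent_consLeafParent]; exact F.acyclic)⟩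

theorem eraseZero_consRoot (F : RForest k) : (consRoot F).eraseZero = F :=
  parent_injective (eraseZeroParent_consRootParent F.parent)

theorem eraseZero_consLeaf (F : RForest k) (r : Fin k) : (consLeaf F r).eraseZero = F :=
  parent_injective (eraseZeroParent_consLeafParent F.parent r)

theorem isLeaf_consLeaf_zero (F : RForest k) (r : Fin k) : (consLeaf F r).IsLeaf 0 :=
  consLeafParent_ne_some_zero F.parent r

theorem consRoot_eraseZero {F : RForest (k + 1)} (hT : F.IsTree) (h0 : F.parent 0 = none) :
    consRoot F.eraseZero = F := by
  refine parent_injective (funext fun v => ?_)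
  cases v using Fin.cases with
  | zero => exact h0.symm
  | succ i =>
    show some ((eraseZeroParent F.parent i).elim 0 Fin.succ) = F.parent i.succ
    cases hi : F.parent i.succ with
    | none => exact absurd (hT.unique hi h0) (Fin.succ_ne_zero i)
    | some p =>
      cases p using Fin.cases with
      | zero => rw [eraseZeroParent_eq_none_iff.mpr (.inr hi)]; rfl
      | succ j => rw [eraseZeroParent_eq_some_iff.mpr hi]; rfl

theorem consLeaf_eraseZero {F : RForest (k + 1)} {r : Fin k} (hleaf : F.IsLeaf 0)
    (hr : F.parent 0 = some r.succ) : consLeaf F.eraseZero r = F := by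
  refine parent_injective (funext fun v => ?_)
  cases v using Fin.cases with
  | zero => exact hr.symm
  | succ i =>
    show (eraseZeroParent F.parent i).map Fin.succ = F.parent i.succ
    cases hi : F.parent i.succ with
    | none => rw [eraseZeroParent_eq_none_iff.mpr (.inl hi)]; rfl
    | some p =>
      cases p using Fin.cases with
      | zero => exact absurd hi (hleaf _)
      | succ j => rw [eraseZeroParent_eq_some_iff.mpr hi]; rfl

theorem isTree_consRoot (F : RForest k) : (consRoot F).IsTree := by
  refine ⟨0, rfl, fun v hv => ?_⟩
  cases v using Fin.cases with
  | zero => rfl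
  | succ i => exact absurd hv (Option.some_ne_none _)

theorem isTree_consLeaf {F : RForest k} {r : Fin k} (hT : F.IsTree) (hr : F.parent r = none) :
    (consLeaf F r).IsTree := by
  refine ⟨r.succ, show (F.parent r).map Fin.succ = none by rw [hr]; rfl, fun v hv => ?_⟩
  cases v using Fin.cases with
  | zero => exact absurd hv (Option.some_ne_none _)
  | succ i => exact congrArg Fin.succ (hT.unique (Option.map_eq_none_iff.mp hv) hr)

theorem isTree_eraseZero {F : RForest (k + 1)} (hT : F.IsTree) (hleaf : F.IsLeaf 0)
    (h0 : F.parent 0 ≠ none) : F.eraseZero.IsTree := by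
  obtain ⟨r, hr, hru⟩ := hT
  obtain ⟨r, rfl⟩ := Fin.exists_succ_eq.mpr fun h => h0 (h ▸ hr)
  refine ⟨r, eraseZeroParent_eq_none_iff.mpr (.inl hr), fun i hi => ?_⟩
  rcases eraseZeroParent_eq_none_iff.mp hi with hi | hi
  · exact Fin.succ_injective _ (hru _ hi)
  · exact absurd hi (hleaf _)

theorem sAnc_succ_of_sAnc_eraseZero {F : RForest (k + 1)} {i j : Fin k}
    (h : F.eraseZero.SAnc i j) : F.SAnc i.succ j.succ :=
  transGen_succ_of_transGen_eraseZeroParent h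

theorem sAnc_eraseZero_of_sAnc_succ {F : RForest (k + 1)} (h0 : F.parent 0 = none ∨ F.IsLeaf 0)
    {i j : Fin k} (h : F.SAnc i.succ j.succ) : F.eraseZero.SAnc i j :=
  transGen_eraseZeroParent_of_transGen_succ h0 h

variable {m : ℕ}

theorem containsPat_of_containsPat_eraseZero {F : RForest (k + 1)} {π : Pattern m}
    (h : ContainsPat F.eraseZero π) : ContainsPat F π := by
  obtain ⟨v, hanc, hord⟩ := h
  exact ⟨Fin.succ ∘ v, fun i j hij => sAnc_succ_of_sAnc_eraseZero (hanc i j hij),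
    fun i j => Fin.succ_lt_succ_iff.trans (hord i j)⟩

theorem avoidsSet_eraseZero {F : RForest (k + 1)} {S : Set ((k : ℕ) × Pattern k)}
    (hA : AvoidsSet F S) : AvoidsSet F.eraseZero S :=
  fun p hp h => hA p hp (containsPat_of_containsPat_eraseZero h)

theorem containsPat_eraseZero_of_forall_ne_zero {F : RForest (k + 1)} {π : Pattern m}
    (h0 : F.parent 0 = none ∨ F.IsLeaf 0) {v : Fin m → Fin (k + 1)}
    (hanc : ∀ i j, i < j → F.SAnc (v i) (v j)) (hord : ∀ i j, v i < v j ↔ π i < π j)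
    (hv : ∀ i, v i ≠ 0) : ContainsPat F.eraseZero π := by
  choose w hw using fun i => Fin.exists_succ_eq.mpr (hv i)
  refine ⟨w, fun i j hij => sAnc_eraseZero_of_sAnc_succ h0 ?_, fun i j => ?_⟩
  · rw [hw, hw]
    exact hanc i j hij
  · rw [← hord, ← hw, ← hw, Fin.succ_lt_succ_iff]

/-- An instance through the root `0` starts at `0`, the smallest label, so it is an instance of a
pattern starting with its minimum. -/
theorem containsPat_eraseZero_iff_of_parent_zero_eq_none {F : RForest (k + 1)}
    (h0 : F.parent 0 = none) {π : Pattern (m + 1)} (hπ : π 0 ≠ 0) :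
    ContainsPat F.eraseZero π ↔ ContainsPat F π := by
  refine ⟨containsPat_of_containsPat_eraseZero, fun ⟨v, hanc, hord⟩ =>
    containsPat_eraseZero_of_forall_ne_zero (.inl h0) hanc hord fun i hi => ?_⟩
  obtain rfl : i = 0 := by
    by_contra hi0
    exact not_sAnc_of_parent_eq_none h0 (hi ▸ hanc 0 i (Fin.pos_iff_ne_zero.mpr hi0))
  have hlt : v (π.symm 0) < v 0 :=
    (hord _ _).mpr (by rw [π.apply_symm_apply]; exact Fin.pos_iff_ne_zero.mpr hπ)
  rw [hi] at hlt
  exact Fin.not_lt_zero _ hlt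

/-- The leaf `0` could only end an instance, but then the two entries before it would be two
strict ancestors of `0`, whose only strict ancestor is the root `r`. -/
theorem containsPat_eraseZero_iff_of_isLeaf_zero {F : RForest (k + 1)} {r : Fin (k + 1)}
    (hleaf : F.IsLeaf 0) (hr : F.parent 0 = some r) (hroot : F.parent r = none)
    {π : Pattern (m + 3)} : ContainsPat F.eraseZero π ↔ ContainsPat F π := by
  refine ⟨containsPat_of_containsPat_eraseZero, fun ⟨v, hanc, hord⟩ =>
    containsPat_eraseZero_of_forall_ne_zero (.inr hleaf) hanc hord fun i hi => ?_⟩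
  have h1i : 1 < i := by
    by_contra h1i
    refine hleaf.not_sAnc (hi ▸ hanc i 2 ?_)
    simp only [Fin.lt_def, Fin.val_one, Fin.val_two] at h1i ⊢
    omega
  have hv1 : v 1 = r := eq_of_sAnc_of_parent_eq_some hr hroot (hi ▸ hanc 1 i h1i)
  refine not_sAnc_of_parent_eq_none hroot (hv1 ▸ hanc 0 1 ?_)
  simp only [Fin.lt_def, Fin.val_one, Fin.val_zero]
  omega

theorem containsPat_of_strictMono {F : RForest n} {π : Pattern 3} {e : Fin 3 → Fin n}
    (he : StrictMono e) (h01 : F.SAnc (e (π 0)) (e (π 1))) (h12 : F.SAnc (e (π 1)) (e (π 2))) :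
    ContainsPat F π := by
  refine ⟨e ∘ π, fun i j hij => ?_, fun i j => he.lt_iff_lt⟩
  fin_cases i <;> fin_cases j <;> first | exact absurd hij (by decide) | skip
  exacts [h01, h01.trans h12, h12]

theorem isLeaf_zero_of_parent_zero_eq_some {F : RForest (k + 1)} (h213 : ¬ ContainsPat F p213)
    (h312 : ¬ ContainsPat F p312) {p : Fin (k + 1)} (hp : F.parent 0 = some p) : F.IsLeaf 0 := by
  intro c hc
  have hp0 : 0 < p := Fin.pos_iff_ne_zero.mpr (SAnc.single hp).ne
  have hc0 : 0 < c := Fin.pos_iff_ne_zero.mpr (SAnc.single hc).ne.symm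
  rcases (((SAnc.single hp).trans (SAnc.single hc)).ne).lt_or_gt with hpc | hcp
  · exact h213 (containsPat_of_strictMono (e := ![0, p, c]) (by simp [hp0, hpc])
      (SAnc.single hp) (SAnc.single hc))
  · exact h312 (containsPat_of_strictMono (e := ![0, c, p]) (by simp [hc0, hcp])
      (SAnc.single hp) (SAnc.single hc))

theorem parent_eq_none_of_parent_zero_eq_some {F : RForest (k + 1)}
    (h231 : ¬ ContainsPat F p231) (h321 : ¬ ContainsPat F p321) {p : Fin (k + 1)}
    (hp : F.parent 0 = some p) : F.parent p = none := by
  refine Option.eq_none_iff_forall_ne_some.mpr fun q hq => ?_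
  have hp0 : 0 < p := Fin.pos_iff_ne_zero.mpr (SAnc.single hp).ne
  have hq0 : 0 < q := Fin.pos_iff_ne_zero.mpr ((SAnc.single hq).trans (SAnc.single hp)).ne
  rcases (SAnc.single hq).ne.lt_or_gt with hqp | hpq
  · exact h231 (containsPat_of_strictMono (e := ![0, q, p]) (by simp [hq0, hqp])
      (SAnc.single hq) (SAnc.single hp))
  · exact h321 (containsPat_of_strictMono (e := ![0, p, q]) (by simp [hp0, hpq])
      (SAnc.single hq) (SAnc.single hp))

end RForest

def patternsS : Set ((k : ℕ) × Pattern k) := {⟨3, p213⟩, ⟨3, p231⟩, ⟨3, p312⟩, ⟨3, p321⟩}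

namespace RForest

variable {k : ℕ}

theorem avoidsSet_patternsS_iff {n : ℕ} {F : RForest n} :
    AvoidsSet F patternsS ↔ ¬ ContainsPat F p213 ∧ ¬ ContainsPat F p231 ∧
      ¬ ContainsPat F p312 ∧ ¬ ContainsPat F p321 := by
  simp [AvoidsSet, patternsS]

theorem avoidsSet_patternsS_eraseZero_iff_of_parent_zero_eq_none {F : RForest (k + 1)}
    (h0 : F.parent 0 = none) : AvoidsSet F.eraseZero patternsS ↔ AvoidsSet F patternsS := by
  simp only [avoidsSet_patternsS_iff,
    containsPat_eraseZero_iff_of_parent_zero_eq_none h0 (by decide : p213 0 ≠ 0),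
    containsPat_eraseZero_iff_of_parent_zero_eq_none h0 (by decide : p231 0 ≠ 0),
    containsPat_eraseZero_iff_of_parent_zero_eq_none h0 (by decide : p312 0 ≠ 0),
    containsPat_eraseZero_iff_of_parent_zero_eq_none h0 (by decide : p321 0 ≠ 0)]

theorem avoidsSet_patternsS_eraseZero_iff_of_isLeaf_zero {F : RForest (k + 1)}
    {r : Fin (k + 1)} (hleaf : F.IsLeaf 0) (hr : F.parent 0 = some r) (hroot : F.parent r = none) :
    AvoidsSet F.eraseZero patternsS ↔ AvoidsSet F patternsS := by
  simp only [avoidsSet_patternsS_iff, containsPat_eraseZero_iff_of_isLeaf_zero hleaf hr hroot]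

theorem isLeaf_zero_and_parent_zero_root_of_avoidsSet {F : RForest (k + 1)}
    (hA : AvoidsSet F patternsS) (h0 : F.parent 0 ≠ none) :
    F.IsLeaf 0 ∧ ∃ r : Fin k, F.parent 0 = some r.succ ∧ F.parent r.succ = none := by
  obtain ⟨h213, h231, h312, h321⟩ := avoidsSet_patternsS_iff.mp hA
  obtain ⟨p, hp⟩ := Option.ne_none_iff_exists'.mp h0
  obtain ⟨r, rfl⟩ := Fin.exists_succ_eq.mpr (SAnc.single hp).ne
  exact ⟨isLeaf_zero_of_parent_zero_eq_some h213 h312 hp,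
    r, hp, parent_eq_none_of_parent_zero_eq_some h231 h321 hp⟩

end RForest

open RForest

theorem card_avoiding_trees_parent_zero_eq_none {k : ℕ} :
    Nat.card {T : {F : RForest (k + 1) // F.IsTree ∧ AvoidsSet F patternsS} //
      T.1.parent 0 = none} = fCount patternsS k := by
  refine Nat.card_eq_of_bijective (fun T => ⟨T.1.1.eraseZero, avoidsSet_eraseZero T.1.2.2⟩)
    ⟨?_, ?_⟩
  · rintro ⟨⟨F, hF, _⟩, hF0⟩ ⟨⟨G, hG, _⟩, hG0⟩ h
    refine Subtype.ext (Subtype.ext (show F = G from ?_))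
    rw [← consRoot_eraseZero hF hF0, ← consRoot_eraseZero hG hG0]
    exact congrArg (consRoot ∘ Subtype.val) h
  · rintro ⟨F, hA⟩
    refine ⟨⟨⟨consRoot F, isTree_consRoot F, ?_⟩, rfl⟩, Subtype.ext (eraseZero_consRoot F)⟩
    rwa [← avoidsSet_patternsS_eraseZero_iff_of_parent_zero_eq_none rfl, eraseZero_consRoot]

theorem card_avoiding_trees_parent_zero_ne_none {k : ℕ} :
    Nat.card {T : {F : RForest (k + 1) // F.IsTree ∧ AvoidsSet F patternsS} //
      ¬ T.1.parent 0 = none} = tCount patternsS k := by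
  refine Nat.card_eq_of_bijective (fun T => ⟨T.1.1.eraseZero, isTree_eraseZero T.1.2.1
    (isLeaf_zero_and_parent_zero_root_of_avoidsSet T.1.2.2 T.2).1 T.2,
    avoidsSet_eraseZero T.1.2.2⟩) ⟨?_, ?_⟩
  · rintro ⟨⟨F, hF, hFA⟩, hF0⟩ ⟨⟨G, hG, hGA⟩, hG0⟩ h
    replace h : F.eraseZero = G.eraseZero := congrArg Subtype.val h
    obtain ⟨hFl, r, hFr, hFroot⟩ := isLeaf_zero_and_parent_zero_root_of_avoidsSet hFA hF0
    obtain ⟨hGl, s, hGs, hGroot⟩ := isLeaf_zero_and_parent_zero_root_of_avoidsSet hGA hG0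
    obtain rfl : r = s := (isTree_eraseZero hF hFl hF0).unique
      (eraseZeroParent_eq_none_iff.mpr (.inl hFroot))
      (h ▸ eraseZeroParent_eq_none_iff.mpr (.inl hGroot))
    refine Subtype.ext (Subtype.ext (show F = G from ?_))
    rw [← consLeaf_eraseZero hFl hFr, ← consLeaf_eraseZero hGl hGs, h]
  · rintro ⟨F, ⟨r, hr, hru⟩, hA⟩
    refine ⟨⟨⟨consLeaf F r, isTree_consLeaf ⟨r, hr, hru⟩ hr, ?_⟩, Option.some_ne_none _⟩,
      Subtype.ext (eraseZero_consLeaf F r)⟩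
    rwa [← avoidsSet_patternsS_eraseZero_iff_of_isLeaf_zero (isLeaf_consLeaf_zero F r) rfl
      (show (F.parent r).map Fin.succ = none by rw [hr]; rfl), eraseZero_consLeaf]

/-- For `S = {213, 231, 312, 321}`: `t_{k+1}(S) = t_k(S) + f_k(S)` for all `k ≥ 0`. -/
theorem tCount_succ_eq_tCount_add_fCount :
    ∀ k : ℕ,
      tCount ({⟨3, p213⟩, ⟨3, p231⟩, ⟨3, p312⟩, ⟨3, p321⟩} : Set ((k : ℕ) × Pattern k))
          (k + 1)
        = tCount ({⟨3, p213⟩, ⟨3, p231⟩, ⟨3, p312⟩, ⟨3, p321⟩} :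
            Set ((k : ℕ) × Pattern k)) k
          + fCount ({⟨3, p213⟩, ⟨3, p231⟩, ⟨3, p312⟩, ⟨3, p321⟩} :
              Set ((k : ℕ) × Pattern k)) k := by
  intro k
  change tCount patternsS (k + 1) = tCount patternsS k + fCount patternsS k
  rw [tCount, Nat.card_eq_card_subtype_add_card_subtype_not fun T => T.1.parent 0 = none,
    card_avoiding_trees_parent_zero_eq_none, card_avoiding_trees_parent_zero_ne_none, add_comm]
end
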